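/- arXiv:1401.7079 — 3 statements merged into one kernel-verified Lean document; each statement's English description precedes it below -/
import Mathlib

section
/- Suppose Assumption A holds. Then the augmented dual function d(y) := min_{x∈X} L(x;y) is differentiable everywhere with ∇d(y) = q − Ex(y) for any x(y) ∈ X(y). Moreover, for any scalar η ≤ f* (the optimal value of the problem), on the superlevel set U := {y ∈ ℝ^m : d(y) ≥ η} the gradient of d is (1/ρ)-Lipschitz: ‖∇d(y') − ∇d(y)‖ ≤ (1/ρ)‖y' − y‖ for all y, y' ∈ U. -/
open scoped BigOperators RealInnerProductSpace
open Filter Topology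

noncomputable section

/-- The `k`-th block space `ℝ^{n_k}`. -/
abbrev Blk {K : ℕ} (n : Fin K → ℕ) (k : Fin K) := EuclideanSpace ℝ (Fin (n k))

/-- The full variable space `ℝ^n = ℝ^{n_1} × ⋯ × ℝ^{n_K}` with the Euclidean norm. -/
abbrev Full {K : ℕ} (n : Fin K → ℕ) := PiLp 2 (Blk n)

/-- The dual space `ℝ^m`. -/
abbrev Dua (m : ℕ) := EuclideanSpace ℝ (Fin m)

/-- Replace the `k`-th block of `x` by `v`. -/
def bupd {K : ℕ} {n : Fin K → ℕ} (x : Full n) (k : Fin K) (v : Blk n k) : Full n :=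
  WithLp.toLp 2 (Function.update x k v)

/-- The vector `w_k = (x^{new}_1, …, x^{new}_{k-1}, x^{old}_k, …, x^{old}_K)`. -/
def mix {K : ℕ} {n : Fin K → ℕ} (xo xn : Full n) (k : Fin K) : Full n :=
  WithLp.toLp 2 (fun j : Fin K => if (j : ℕ) < (k : ℕ) then xn j else xo j)

/-- Data of the linearly constrained block problem
`min g(x) + ∑ₖ hₖ(xₖ)  s.t.  ∑ₖ Eₖ xₖ = q,  xₖ ∈ Xₖ`, together with the penalty `ρ > 0`. -/
structure PData (K m : ℕ) (n : Fin K → ℕ) where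
  g : Full n → ℝ
  h : (k : Fin K) → Blk n k → ℝ
  Ek : (k : Fin K) → Blk n k →L[ℝ] Dua m
  q : Dua m
  Xk : (k : Fin K) → Set (Blk n k)
  ρ : ℝ
  ρpos : 0 < ρ

namespace PData

variable {K m : ℕ} {n : Fin K → ℕ} (P : PData K m n)

/-- `E x = ∑ₖ Eₖ xₖ`. -/
def Emap (x : Full n) : Dua m := ∑ k, P.Ek k (x k)

/-- `h(x) = ∑ₖ hₖ(xₖ)`. -/
def hsum (x : Full n) : ℝ := ∑ k, P.h k (x k)

/-- `f(x) = g(x) + ∑ₖ hₖ(xₖ)`. -/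
def f (x : Full n) : ℝ := P.g x + P.hsum x

/-- The feasible set `X = ∏ₖ Xₖ`. -/
def X : Set (Full n) := {x | ∀ k, x k ∈ P.Xk k}

/-- The augmented Lagrangian `L(x;y) = f(x) + ⟨y, q - Ex⟩ + (ρ/2)‖q - Ex‖²`. -/
def L (x : Full n) (y : Dua m) : ℝ :=
  P.f x + ⟪y, P.q - P.Emap x⟫ + (P.ρ / 2) * ‖P.q - P.Emap x‖ ^ 2

/-- The augmented dual function `d(y) = min_{x ∈ X} L(x;y)`. -/
def d (y : Dua m) : ℝ := sInf ((fun x => P.L x y) '' P.X)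

/-- The set `X(y) = argmin_{x ∈ X} L(x;y)`. -/
def Xopt (y : Dua m) : Set (Full n) := {x | x ∈ P.X ∧ ∀ z ∈ P.X, P.L x y ≤ P.L z y}

/-- The optimal value `f*` of the constrained problem. -/
def fstar : ℝ := sInf (P.f '' {x | x ∈ P.X ∧ P.Emap x = P.q})

/-- The dual optimal value `d*`. -/
def dstar : ℝ := ⨆ y, P.d y

/-- The smooth part of the augmented Lagrangian, `L(x;y) - h(x)`, as a function of `x`. -/
def Ls (y : Dua m) (x : Full n) : ℝ :=
  P.g x + ⟪y, P.q - P.Emap x⟫ + (P.ρ / 2) * ‖P.q - P.Emap x‖ ^ 2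

/-- `prox` is the proximity operator of `h`: `prox(z) = argmin_u h(u) + ½‖z - u‖²`. -/
def IsProx (prox : Full n → Full n) : Prop :=
  ∀ z u : Full n,
    P.hsum (prox z) + (1 : ℝ) / 2 * ‖z - prox z‖ ^ 2 ≤ P.hsum u + (1 : ℝ) / 2 * ‖z - u‖ ^ 2

/-- The proximal gradient `∇̃ₓ L(x;y) = x - prox_h[x - ∇ₓ(L(x;y) - h(x))]`. -/
def proxGrad (prox : Full n → Full n) (x : Full n) (y : Dua m) : Full n :=
  x - prox (x - gradient (P.Ls y) x)

end PData

/-- Assumption A(a): convexity, attainment of the primal minimum and of the dual optimal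
value, and nonemptiness of the feasible region. -/
structure AssumpAa {K m : ℕ} {n : Fin K → ℕ} (P : PData K m n) : Prop where
  gconv : ConvexOn ℝ Set.univ P.g
  hconv : ∀ k, ConvexOn ℝ Set.univ (P.h k)
  Xconv : ∀ k, Convex ℝ (P.Xk k)
  primal_attained : ∃ x, x ∈ P.X ∧ P.Emap x = P.q ∧
    ∀ z, z ∈ P.X → P.Emap z = P.q → P.f x ≤ P.f z
  dual_attained : ∃ y : Dua m, ∀ y' : Dua m, P.d y' ≤ P.d y
  feas : ∃ x, x ∈ P.X ∧ P.Emap x = P.q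

/-- Assumption A(b): `g(x) = ℓ(Ax) + ⟨x, b⟩` with `ℓ` strictly convex and continuously
differentiable, and each `hₖ` a mixed `ℓ₁/ℓ₂` norm
`hₖ(xₖ) = λₖ‖xₖ‖₁ + ∑_J w_J ‖x_{k,J}‖₂` for a partition `π k` of the coordinates. -/
structure AssumpAb {K m : ℕ} {n : Fin K → ℕ} (P : PData K m n) where
  s : ℕ
  A : Full n →L[ℝ] EuclideanSpace ℝ (Fin s)
  b : Full n
  ell : EuclideanSpace ℝ (Fin s) → ℝ
  ell_strict : StrictConvexOn ℝ Set.univ ell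
  ell_diff : ContDiff ℝ 1 ell
  geq : ∀ x, P.g x = ell (A x) + ⟪x, b⟫
  J : Fin K → ℕ
  π : (k : Fin K) → Fin (n k) → Fin (J k)
  lam : Fin K → ℝ
  lam_nonneg : ∀ k, 0 ≤ lam k
  w : (k : Fin K) → Fin (J k) → ℝ
  w_nonneg : ∀ k j, 0 ≤ w k j
  heq : ∀ k (v : Blk n k),
    P.h k v = lam k * ∑ i, |v i| +
      ∑ j, w k j * Real.sqrt (∑ i ∈ Finset.univ.filter (fun i => π k i = j), v i ^ 2)

/-- Polyhedral description of the sets `Xₖ = {xₖ : Cₖ xₖ ≤ cₖ}` (Assumption A(c), without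
compactness). -/
structure PolyData {K m : ℕ} {n : Fin K → ℕ} (P : PData K m n) where
  mC : Fin K → ℕ
  C : (k : Fin K) → Blk n k →L[ℝ] EuclideanSpace ℝ (Fin (mC k))
  c : (k : Fin K) → EuclideanSpace ℝ (Fin (mC k))
  Xeq : ∀ k, P.Xk k = {v | ∀ i, C k v i ≤ c k i}

/-- Assumption B: for each `k`, `uₖ(·;·)` is a locally tight, gradient-consistent, strongly
convex upper bound of `g(x) + (ρ/2)‖Ex - q‖²` in the `k`-th block, with Lipschitz gradient. -/
structure AssumpB {K m : ℕ} {n : Fin K → ℕ} (P : PData K m n) where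
  u : (k : Fin K) → Blk n k → Full n → ℝ
  γ : Fin K → ℝ
  Lip : Fin K → ℝ
  γpos : ∀ k, 0 < γ k
  Lippos : ∀ k, 0 < Lip k
  ucont : ∀ k, Continuous fun p : Blk n k × Full n => u k p.1 p.2
  ua : ∀ k, ∀ x ∈ P.X, u k (x k) x = P.g x + (P.ρ / 2) * ‖P.Emap x - P.q‖ ^ 2
  ub : ∀ k, ∀ x ∈ P.X, ∀ v ∈ P.Xk k,
    P.g (bupd x k v) + (P.ρ / 2) * ‖P.Emap (bupd x k v) - P.q‖ ^ 2 ≤ u k v x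
  uc : ∀ k, ∀ x ∈ P.X,
    gradient (fun v => u k v x) (x k) =
      gradient (fun v => P.g (bupd x k v) + (P.ρ / 2) * ‖P.Emap (bupd x k v) - P.q‖ ^ 2) (x k)
  ud : ∀ k, ∀ x ∈ P.X, ∀ v ∈ P.Xk k, ∀ v' ∈ P.Xk k,
    u k v' x + ⟪gradient (fun w => u k w x) v', v - v'⟫ + γ k / 2 * ‖v - v'‖ ^ 2 ≤ u k v x
  ue : ∀ k, ∀ x ∈ P.X, ∀ v ∈ P.Xk k, ∀ v' ∈ P.Xk k,
    ‖gradient (fun w => u k w x) v - gradient (fun w => u k w x) v'‖ ≤ Lip k * ‖v - v'‖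

/-- `v` is the minimizer of the `k`-th RBSUM-M primal subproblem
`min_{xₖ ∈ Xₖ} uₖ(xₖ; x) - ⟨y, Eₖ xₖ⟩ + hₖ(xₖ)`. -/
def RStepMin {K m : ℕ} {n : Fin K → ℕ} (P : PData K m n) (B : AssumpB P)
    (x : Full n) (y : Dua m) (k : Fin K) (v : Blk n k) : Prop :=
  v ∈ P.Xk k ∧ ∀ w ∈ P.Xk k,
    B.u k v x - ⟪y, P.Ek k v⟫ + P.h k v ≤ B.u k w x - ⟪y, P.Ek k w⟫ + P.h k w

/-- One full iteration of BSUM-M: the dual gradient ascent step with stepsize `α`, followed by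
the sequential (Gauss–Seidel) block minimizations of the upper bounds of the augmented
Lagrangian. -/
def BSUMMStep {K m : ℕ} {n : Fin K → ℕ} (P : PData K m n) (B : AssumpB P) (α : ℝ)
    (xo : Full n) (yo : Dua m) (xn : Full n) (yn : Dua m) : Prop :=
  yn = yo + α • (P.q - P.Emap xo) ∧
  ∀ k, xn k ∈ P.Xk k ∧ ∀ v ∈ P.Xk k,
    B.u k (xn k) (mix xo xn k) - ⟪yn, P.Ek k (xn k)⟫ + P.h k (xn k) ≤
      B.u k v (mix xo xn k) - ⟪yn, P.Ek k v⟫ + P.h k v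

/-- One iteration of RBSUM-M given the randomly drawn index `i ∈ {0, 1, …, K}`:
if `i = 0`, a dual gradient ascent step; if `i = k+1`, the `k`-th block is replaced by the
minimizer of the `k`-th subproblem and everything else is kept. -/
def RBSUMMUpdate {K m : ℕ} {n : Fin K → ℕ} (P : PData K m n) (B : AssumpB P) (α : ℝ)
    (i : Fin (K + 1)) (xo : Full n) (yo : Dua m) (xn : Full n) (yn : Dua m) : Prop :=
  if i = 0 then xn = xo ∧ yn = yo + α • (P.q - P.Emap xo)
  else ∃ k : Fin K, i = k.succ ∧ yn = yo ∧ (∀ j, j ≠ k → xn j = xo j) ∧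
    RStepMin P B xo yo k (xn k)


namespace PData
variable {K m : ℕ} {n : Fin K → ℕ} (P : PData K m n)

lemma Emap_comb (x x' : Full n) (a b : ℝ) :
    P.Emap (a • x + b • x') = a • P.Emap x + b • P.Emap x' := by
  unfold Emap
  rw [Finset.smul_sum, Finset.smul_sum, ← Finset.sum_add_distrib]
  refine Finset.sum_congr rfl fun k _ => ?_
  have h : (a • x + b • x') k = a • x k + b • x' k := rfl
  rw [h, map_add, map_smul, map_smul]

lemma resid_comb (x x' : Full n) {a b : ℝ} (hab : a + b = 1) :
    P.q - P.Emap (a • x + b • x') =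
      a • (P.q - P.Emap x) + b • (P.q - P.Emap x') := by
  have hq : a • P.q + b • P.q = P.q := by rw [← add_smul, hab, one_smul]
  calc P.q - P.Emap (a • x + b • x')
      = (a • P.q + b • P.q) - (a • P.Emap x + b • P.Emap x') := by
        rw [Emap_comb, hq]
    _ = a • (P.q - P.Emap x) + b • (P.q - P.Emap x') := by
        rw [smul_sub, smul_sub]; abel

lemma L_shift (x : Full n) (y y' : Dua m) :
    P.L x y' = P.L x y + ⟪y' - y, P.q - P.Emap x⟫ := by
  unfold L; rw [inner_sub_left]; ring

lemma normsq_comb {a b : ℝ} (hab : a + b = 1) (r r' : Dua m) :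
    ‖a • r + b • r'‖ ^ 2 = a * ‖r‖ ^ 2 + b * ‖r'‖ ^ 2 - a * b * ‖r - r'‖ ^ 2 := by
  have h1 := norm_add_sq_real (a • r) (b • r')
  have h2 := norm_sub_sq_real r r'
  have h3 : ‖a • r‖ ^ 2 = a ^ 2 * ‖r‖ ^ 2 := by
    rw [norm_smul, mul_pow, Real.norm_eq_abs, sq_abs]
  have h4 : ‖b • r'‖ ^ 2 = b ^ 2 * ‖r'‖ ^ 2 := by
    rw [norm_smul, mul_pow, Real.norm_eq_abs, sq_abs]
  have h5 : ⟪a • r, b • r'⟫ = a * b * ⟪r, r'⟫ := by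
    rw [real_inner_smul_left, real_inner_smul_right]; ring
  have h6 : ‖r‖ ^ 2 = ⟪r, r⟫ := (real_inner_self_eq_norm_sq r).symm
  have h7 : ‖r'‖ ^ 2 = ⟪r', r'⟫ := (real_inner_self_eq_norm_sq r').symm
  rw [h1, h3, h4, h5, h2, h6, h7]
  linear_combination (a * ⟪r, r⟫ + b * ⟪r', r'⟫) * hab

lemma f_comb (hAa : AssumpAa P) (x x' : Full n) {a b : ℝ}
    (ha : 0 ≤ a) (hb : 0 ≤ b) (hab : a + b = 1) :
    P.f (a • x + b • x') ≤ a * P.f x + b * P.f x' := by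
  unfold f hsum
  have hg := hAa.gconv.2 (Set.mem_univ x) (Set.mem_univ x') ha hb hab
  have hh : ∀ k ∈ Finset.univ, P.h k ((a • x + b • x') k) ≤
      a * P.h k (x k) + b * P.h k (x' k) := by
    intro k _
    have h := (hAa.hconv k).2 (Set.mem_univ (x k)) (Set.mem_univ (x' k)) ha hb hab
    simpa [smul_eq_mul] using h
  have hs := Finset.sum_le_sum hh
  rw [Finset.sum_add_distrib, ← Finset.mul_sum, ← Finset.mul_sum] at hs
  simp only [smul_eq_mul] at hg
  linarith

lemma Emap_cont : Continuous P.Emap :=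
  continuous_finset_sum _ fun k _ => (P.Ek k).continuous.comp (PiLp.continuous_apply 2 _ k)

lemma f_cont (hAb : AssumpAb P) : Continuous P.f := by
  have hg : Continuous P.g := by
    have e : P.g = fun x => hAb.ell (hAb.A x) + ⟪x, hAb.b⟫ := funext hAb.geq
    rw [e]
    exact (hAb.ell_diff.continuous.comp hAb.A.continuous).add
      (continuous_id.inner continuous_const)
  have hh : ∀ k, Continuous (P.h k) := by
    intro k
    have e : P.h k = fun v => hAb.lam k * ∑ i, |v i| +
        ∑ j, hAb.w k j * Real.sqrt (∑ i ∈ Finset.univ.filter (fun i => hAb.π k i = j), v i ^ 2) :=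
      funext (hAb.heq k)
    rw [e]
    refine Continuous.add ?_ ?_
    · exact continuous_const.mul (continuous_finset_sum _ fun i _ => (PiLp.continuous_apply 2 _ i).abs)
    · refine continuous_finset_sum _ fun j _ => continuous_const.mul ?_
      exact (continuous_finset_sum _ fun i _ => ((PiLp.continuous_apply 2 _ i).pow 2)).sqrt
  unfold f hsum
  exact hg.add (continuous_finset_sum _ fun k _ => (hh k).comp (PiLp.continuous_apply 2 _ k))

lemma L_cont (hAb : AssumpAb P) (y : Dua m) : Continuous fun x => P.L x y := by
  unfold L
  have hr : Continuous fun x : Full n => P.q - P.Emap x := continuous_const.sub P.Emap_cont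
  exact ((P.f_cont hAb).add (continuous_const.inner hr)).add
    (continuous_const.mul ((hr.norm).pow 2))

lemma exists_opt (hAa : AssumpAa P) (hAb : AssumpAb P)
    (hcomp : ∀ k, IsCompact (P.Xk k)) (y : Dua m) : ∃ x, x ∈ P.Xopt y := by
  obtain ⟨x0, hx0, -⟩ := hAa.feas
  have hXc : IsCompact P.X := by
    have e : P.X = WithLp.toLp 2 '' Set.univ.pi P.Xk := by
      ext z; simp only [X, Set.mem_setOf_eq]
      exact ⟨fun h => ⟨z.ofLp, Set.mem_univ_pi.mpr h, rfl⟩, by rintro ⟨w, hw, rfl⟩; exact Set.mem_univ_pi.mp hw⟩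
    rw [e]; exact (isCompact_univ_pi hcomp).image (PiLp.continuous_toLp 2 _)
  obtain ⟨x, hxX, hmin⟩ := hXc.exists_isMinOn ⟨x0, hx0⟩ (P.L_cont hAb y).continuousOn
  exact ⟨x, hxX, fun z hz => isMinOn_iff.mp hmin z hz⟩

lemma d_eq (y : Dua m) {x : Full n} (hx : x ∈ P.Xopt y) : P.d y = P.L x y :=
  IsLeast.csInf_eq ⟨⟨x, hx.1, rfl⟩, by rintro v ⟨z, hz, rfl⟩; exact hx.2 z hz⟩

lemma L_comb (hAa : AssumpAa P) (y : Dua m) (x x' : Full n) {t : ℝ}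
    (ht : 0 ≤ t) (ht1 : t ≤ 1) :
    P.L ((1-t) • x + t • x') y ≤ (1-t) * P.L x y + t * P.L x' y
      - P.ρ/2 * ((1-t)*t) * ‖(P.q - P.Emap x) - (P.q - P.Emap x')‖^2 := by
  have ha : (0:ℝ) ≤ 1 - t := by linarith
  have hab : (1-t) + t = 1 := by ring
  have hf := P.f_comb hAa x x' ha ht hab
  have hres : P.q - P.Emap ((1-t) • x + t • x')
      = (1-t) • (P.q - P.Emap x) + t • (P.q - P.Emap x') := P.resid_comb x x' hab
  have hinner : ⟪y, (1-t) • (P.q - P.Emap x) + t • (P.q - P.Emap x')⟫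
      = (1-t)*⟪y, P.q - P.Emap x⟫ + t*⟪y, P.q - P.Emap x'⟫ := by
    rw [inner_add_right, real_inner_smul_right, real_inner_smul_right]
  have hnorm := normsq_comb hab (P.q - P.Emap x) (P.q - P.Emap x')
  unfold L
  rw [hres, hinner, hnorm]
  linarith

lemma L_strong (hAa : AssumpAa P) (y : Dua m) {x x' : Full n}
    (hx : x ∈ P.Xopt y) (hx' : x' ∈ P.X) :
    P.L x y + P.ρ/2 * ‖(P.q - P.Emap x) - (P.q - P.Emap x')‖^2 ≤ P.L x' y := by
  have key : ∀ t : ℝ, 0 < t → t ≤ 1 →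
      P.ρ/2 * (1-t) * ‖(P.q - P.Emap x) - (P.q - P.Emap x')‖^2 ≤ P.L x' y - P.L x y := by
    intro t ht ht1
    have hzX : ((1-t) • x + t • x') ∈ P.X := fun k =>
      hAa.Xconv k (hx.1 k) (hx' k) (by linarith) ht.le (by ring)
    have h1 : P.L x y ≤ P.L ((1-t) • x + t • x') y := hx.2 _ hzX
    have h2 := P.L_comb hAa y x x' ht.le ht1
    have h3 : t * (P.ρ/2 * (1-t) * ‖(P.q - P.Emap x) - (P.q - P.Emap x')‖^2)
        ≤ t * (P.L x' y - P.L x y) := by nlinarith [h1, h2]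
    exact le_of_mul_le_mul_left h3 ht
  have hlim : Tendsto (fun t : ℝ => P.ρ/2 * (1-t) * ‖(P.q - P.Emap x) - (P.q - P.Emap x')‖^2)
      (𝓝[>] (0:ℝ)) (𝓝 (P.ρ/2 * (1-0) * ‖(P.q - P.Emap x) - (P.q - P.Emap x')‖^2)) := by
    apply Tendsto.mono_left _ nhdsWithin_le_nhds
    exact Continuous.tendsto (by continuity) 0
  have hev : ∀ᶠ t in 𝓝[>] (0:ℝ),
      P.ρ/2 * (1-t) * ‖(P.q - P.Emap x) - (P.q - P.Emap x')‖^2 ≤ P.L x' y - P.L x y := by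
    filter_upwards [Ioc_mem_nhdsGT_of_mem (Set.left_mem_Ico.mpr one_pos)] with t ht
    exact key t ht.1 ht.2
  have hfin := le_of_tendsto hlim hev
  simp only [sub_zero, mul_one] at hfin ⊢
  linarith

lemma inner_four (u v a b : Dua m) :
    ⟪u - v, b⟫ + ⟪v - u, a⟫ = ⟪v - u, a - b⟫ := by
  simp only [inner_sub_left, inner_sub_right]; ring

lemma contract (hAa : AssumpAa P) {y y' : Dua m} {x x' : Full n}
    (hx : x ∈ P.Xopt y) (hx' : x' ∈ P.Xopt y') :
    ‖(P.q - P.Emap x') - (P.q - P.Emap x)‖ ≤ 1 / P.ρ * ‖y' - y‖ := by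
  have h1 := P.L_strong hAa y hx hx'.1
  have h2 := P.L_strong hAa y' hx' hx.1
  have e1 : P.L x' y = P.L x' y' + ⟪y - y', P.q - P.Emap x'⟫ := P.L_shift x' y' y
  have e2 : P.L x y' = P.L x y + ⟪y' - y, P.q - P.Emap x⟫ := P.L_shift x y y'
  have hnn : ‖(P.q - P.Emap x) - (P.q - P.Emap x')‖
      = ‖(P.q - P.Emap x') - (P.q - P.Emap x)‖ := norm_sub_rev _ _
  rw [e1] at h1; rw [e2] at h2; rw [hnn] at h1
  have hip := inner_four y y' (P.q - P.Emap x) (P.q - P.Emap x')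
  have hcs : ⟪y' - y, (P.q - P.Emap x) - (P.q - P.Emap x')⟫
      ≤ ‖y' - y‖ * ‖(P.q - P.Emap x) - (P.q - P.Emap x')‖ := real_inner_le_norm _ _
  rw [hnn] at hcs
  have hsum : P.ρ * ‖(P.q - P.Emap x') - (P.q - P.Emap x)‖^2
      ≤ ‖y' - y‖ * ‖(P.q - P.Emap x') - (P.q - P.Emap x)‖ := by
    have hnn2 : ‖(P.q - P.Emap x) - (P.q - P.Emap x')‖^2
        = ‖(P.q - P.Emap x') - (P.q - P.Emap x)‖^2 := by rw [hnn]
    linarith [h1, h2, hip, hcs, hnn2]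
  rcases eq_or_lt_of_le (norm_nonneg ((P.q - P.Emap x') - (P.q - P.Emap x))) with h0 | h0
  · rw [← h0]
    have h9 : (0:ℝ) ≤ 1 / P.ρ := le_of_lt (one_div_pos.mpr P.ρpos)
    exact mul_nonneg h9 (norm_nonneg _)
  · have h3 : P.ρ * ‖(P.q - P.Emap x') - (P.q - P.Emap x)‖
        * ‖(P.q - P.Emap x') - (P.q - P.Emap x)‖
        ≤ ‖y' - y‖ * ‖(P.q - P.Emap x') - (P.q - P.Emap x)‖ := by nlinarith [hsum]
    have h4 := le_of_mul_le_mul_right h3 h0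
    rw [div_mul_eq_mul_div, one_mul, le_div_iff₀ P.ρpos]
    linarith

end PData


namespace PData
variable {K m : ℕ} {n : Fin K → ℕ} (P : PData K m n)

lemma grad_at (hAa : AssumpAa P) (hAb : AssumpAb P)
    (hcomp : ∀ k, IsCompact (P.Xk k)) (y : Dua m) {x : Full n} (hx : x ∈ P.Xopt y) :
    HasGradientAt P.d (P.q - P.Emap x) y := by
  have bound : ∀ y' : Dua m,
      ‖P.d y' - P.d y - ⟪P.q - P.Emap x, y' - y⟫‖ ≤ 1 / P.ρ * ‖y' - y‖ ^ 2 := by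
    intro y'
    obtain ⟨x', hx'⟩ := P.exists_opt hAa hAb hcomp y'
    have e1 : P.d y = P.L x y := P.d_eq y hx
    have e2 : P.d y' = P.L x' y' := P.d_eq y' hx'
    have up : P.d y' ≤ P.d y + ⟪y' - y, P.q - P.Emap x⟫ := by
      rw [e1, e2]
      calc P.L x' y' ≤ P.L x y' := hx'.2 x hx.1
        _ = P.L x y + ⟪y' - y, P.q - P.Emap x⟫ := P.L_shift x y y'
    have lo : P.d y + ⟪y' - y, P.q - P.Emap x'⟫ ≤ P.d y' := by
      rw [e1, e2, P.L_shift x' y y']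
      have h5 : P.L x y ≤ P.L x' y := hx.2 x' hx'.1
      linarith
    have hcontr : ‖(P.q - P.Emap x') - (P.q - P.Emap x)‖ ≤ 1 / P.ρ * ‖y' - y‖ :=
      P.contract hAa hx hx'
    have hcs : |⟪y' - y, (P.q - P.Emap x') - (P.q - P.Emap x)⟫|
        ≤ ‖y' - y‖ * ‖(P.q - P.Emap x') - (P.q - P.Emap x)‖ := abs_real_inner_le_norm _ _
    have hmul : ‖y' - y‖ * ‖(P.q - P.Emap x') - (P.q - P.Emap x)‖
        ≤ ‖y' - y‖ * (1 / P.ρ * ‖y' - y‖) :=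
      mul_le_mul_of_nonneg_left hcontr (norm_nonneg _)
    have hsplit : ⟪y' - y, (P.q - P.Emap x') - (P.q - P.Emap x)⟫
        = ⟪y' - y, P.q - P.Emap x'⟫ - ⟪y' - y, P.q - P.Emap x⟫ := inner_sub_right _ _ _
    rw [real_inner_comm, Real.norm_eq_abs, abs_le]
    rw [hsplit] at hcs
    rw [abs_le] at hcs
    constructor
    · nlinarith [hcs.1, hmul, lo, norm_nonneg (y' - y)]
    · nlinarith [up, norm_nonneg (y' - y), sq_nonneg ‖y' - y‖, one_div_pos.mpr P.ρpos]
  rw [hasGradientAt_iff_isLittleO, Asymptotics.isLittleO_iff]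
  intro c hc
  have hball : Metric.closedBall y (c * P.ρ) ∈ 𝓝 y :=
    Metric.closedBall_mem_nhds y (mul_pos hc P.ρpos)
  filter_upwards [hball] with y' hy'
  have hdist : ‖y' - y‖ ≤ c * P.ρ := by
    rw [Metric.mem_closedBall, dist_eq_norm] at hy'; exact hy'
  calc ‖P.d y' - P.d y - ⟪P.q - P.Emap x, y' - y⟫‖
      ≤ 1 / P.ρ * ‖y' - y‖ ^ 2 := bound y'
    _ = 1 / P.ρ * ‖y' - y‖ * ‖y' - y‖ := by ring
    _ ≤ 1 / P.ρ * (c * P.ρ) * ‖y' - y‖ := by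
        have h1 : (0:ℝ) ≤ 1 / P.ρ := le_of_lt (one_div_pos.mpr P.ρpos)
        have := mul_le_mul_of_nonneg_left hdist h1
        exact mul_le_mul_of_nonneg_right this (norm_nonneg _)
    _ = c * ‖y' - y‖ := by
        have hρ : P.ρ ≠ 0 := ne_of_gt P.ρpos
        field_simp
end PData


/-- Under Assumption A, the augmented dual function `d` is differentiable
everywhere with `∇d(y) = q - E x(y)` for any `x(y) ∈ X(y)`; moreover, for any `η ≤ f*`,
`∇d` is `(1/ρ)`-Lipschitz on the superlevel set `{y : d(y) ≥ η}`. -/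
theorem stmt1 {K m : ℕ} {n : Fin K → ℕ} (P : PData K m n)
    (hAa : AssumpAa P) (hAb : AssumpAb P) (hPoly : PolyData P)
    (hcomp : ∀ k, IsCompact (P.Xk k)) :
    Differentiable ℝ P.d ∧
    (∀ y : Dua m, ∀ x ∈ P.Xopt y, HasGradientAt P.d (P.q - P.Emap x) y) ∧
    (∀ η : ℝ, η ≤ P.fstar → ∀ y y' : Dua m, η ≤ P.d y → η ≤ P.d y' →
      ‖gradient P.d y' - gradient P.d y‖ ≤ 1 / P.ρ * ‖y' - y‖) := by
  have hgrad : ∀ y : Dua m, ∀ x ∈ P.Xopt y, HasGradientAt P.d (P.q - P.Emap x) y :=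
    fun y x hx => P.grad_at hAa hAb hcomp y hx
  refine ⟨?_, hgrad, ?_⟩
  · intro y
    obtain ⟨x, hx⟩ := P.exists_opt hAa hAb hcomp y
    exact (hgrad y x hx).hasFDerivAt.differentiableAt
  · intro η _ y y' _ _
    obtain ⟨x, hx⟩ := P.exists_opt hAa hAb hcomp y
    obtain ⟨x', hx'⟩ := P.exists_opt hAa hAb hcomp y'
    rw [(hgrad y x hx).gradient, (hgrad y' x' hx').gradient]
    exact P.contract hAa hx hx'
end
end

section
/- Let (a_t)_{t≥1} be a sequence of nonnegative real numbers and (α_t)_{t≥1} a sequence of positive real numbers such that lim_{t→∞} α_t = 0, Σ_{t=1}^∞ α_t = ∞, and Σ_{t=1}^∞ α_t a_t² < ∞. If there exists a constant M ≥ 0 such that |a_{t+1} − a_t| ≤ M(α_t + α_{t−1}) for all t ≥ 2, then lim_{t→∞} a_t = 0. -/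
open Filter Topology

set_option maxHeartbeats 2000000 in
/-- Let `(a_t)` be nonnegative and `(α_t)` positive with `α_t → 0`,
`∑ α_t = ∞` and `∑ α_t a_t² < ∞`. If there is `M ≥ 0` with
`|a_{t+1} - a_t| ≤ M(α_t + α_{t-1})` for all `t ≥ 2`, then `a_t → 0`. -/
theorem stmt12 (a α : ℕ → ℝ) (ha : ∀ t, 0 ≤ a t) (hαpos : ∀ t, 0 < α t)
    (hα0 : Tendsto α atTop (𝓝 0))
    (hdiv : Tendsto (fun N => ∑ t ∈ Finset.range N, α t) atTop atTop)
    (hsum : Summable fun t => α t * a t ^ 2)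
    (M : ℝ) (hM : 0 ≤ M)
    (hinc : ∀ t, 2 ≤ t → |a (t + 1) - a t| ≤ M * (α t + α (t - 1))) :
    Tendsto a atTop (𝓝 0) := by
  classical
  by_contra hcon
  obtain ⟨ε, hε, hfreq⟩ : ∃ ε > 0, ∀ N, ∃ t ≥ N, ε ≤ a t := by
    rw [Metric.tendsto_atTop] at hcon
    push_neg at hcon
    obtain ⟨ε, hεp, h⟩ := hcon
    refine ⟨ε, hεp, fun N => ?_⟩
    obtain ⟨t, ht, h2⟩ := h N
    refine ⟨t, ht, ?_⟩
    simpa [Real.dist_eq, sub_zero, abs_of_nonneg (ha t)] using h2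
  set f : ℕ → ℝ := fun t => α t * a t ^ 2 with hf
  clear_value f
  have hfnn : ∀ t, 0 ≤ f t := by
    intro t; simp only [hf]; exact mul_nonneg (hαpos t).le (sq_nonneg _)
  -- liminf of a is 0
  have hlim : ∀ δ, 0 < δ → ∀ N, ∃ t ≥ N, a t < δ := by
    intro δ hδ N
    by_contra h
    push_neg at h
    have hs : Summable α := by
      refine (summable_nat_add_iff N).1 ?_
      refine Summable.of_nonneg_of_le (fun t => (hαpos _).le) (fun t => ?_)
        (((summable_nat_add_iff (f := f) N).2 hsum).mul_left (δ ^ 2)⁻¹)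
      have h1 : δ ≤ a (t + N) := h _ (Nat.le_add_left _ _)
      have h2 : (0 : ℝ) < δ ^ 2 := by positivity
      rw [inv_mul_eq_div, le_div_iff₀ h2]
      have h3 : δ ^ 2 ≤ a (t + N) ^ 2 := by nlinarith
      have h4 := (hαpos (t + N)).le
      simp only [hf]
      nlinarith
    exact not_tendsto_atTop_of_tendsto_nhds hs.hasSum.tendsto_sum_nat hdiv
  -- WLOG the increment constant is positive
  set K := M + 1 with hK
  clear_value K
  have hKpos : (0 : ℝ) < K := by linarith
  have hinc' : ∀ t, 2 ≤ t → |a (t + 1) - a t| ≤ K * (α t + α (t - 1)) := by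
    intro t ht
    refine (hinc t ht).trans ?_
    have h0 : 0 ≤ α t + α (t - 1) := add_nonneg (hαpos t).le (hαpos _).le
    nlinarith
  -- a tail where the increments are small
  obtain ⟨T0, hT0'⟩ := Metric.tendsto_atTop.1 hα0 (ε / (16 * K))
    (div_pos hε (by linarith))
  have hT0 : ∀ t ≥ T0, α t ≤ ε / (16 * K) := by
    intro t ht
    have h2 := hT0' t ht
    rw [Real.dist_eq, sub_zero, abs_of_nonneg (hαpos t).le] at h2
    linarith
  set T := T0 + 2 with hT
  clear_value T
  have hTsmall : ∀ t ≥ T, K * (α t + α (t - 1)) ≤ ε / 8 := by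
    intro t ht
    have h1 : α t ≤ ε / (16 * K) := hT0 t (by omega)
    have h2 : α (t - 1) ≤ ε / (16 * K) := hT0 (t - 1) (by omega)
    have h3 : K * (α t + α (t - 1)) ≤ K * (ε / (16 * K) + ε / (16 * K)) :=
      mul_le_mul_of_nonneg_left (add_le_add h1 h2) hKpos.le
    have hKne : K ≠ 0 := ne_of_gt hKpos
    have heq : K * (ε / (16 * K) + ε / (16 * K)) = ε / 8 := by
      field_simp; ring
    linarith
  set c := (ε / 2) ^ 2 * (ε / (8 * K)) with hc
  clear_value c
  have hcpos : 0 < c := by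
    rw [hc]
    exact mul_pos (pow_pos (show (0:ℝ) < ε / 2 by linarith) 2)
      (div_pos hε (show (0:ℝ) < 8 * K by linarith))
  -- key crossing estimate
  have key : ∀ N, T ≤ N → ∃ N', N < N' ∧ c ≤ ∑ t ∈ Finset.Ico N N', f t := by
    intro N hN
    obtain ⟨t0, ht0N, ht0⟩ := hlim (ε / 2) (by linarith) N
    obtain ⟨u, hu0, hu⟩ := hfreq (t0 + 1)
    have ht0u : t0 < u := by omega
    set P : ℕ → Prop := fun t => t0 ≤ t ∧ a t < ε / 2 with hP
    set s := Nat.findGreatest P u with hs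
    have hPt0 : P t0 := by rw [hP]; exact ⟨le_rfl, ht0⟩
    have hst0 : t0 ≤ s := Nat.le_findGreatest ht0u.le hPt0
    have hsspec0 : P s := Nat.findGreatest_spec ht0u.le hPt0
    have hsle : s ≤ u := Nat.findGreatest_le u
    have hgreat : ∀ t, s < t → t ≤ u → ¬ P t := fun t h1 h2 =>
      Nat.findGreatest_is_greatest h1 h2
    clear_value s
    have hsspec : t0 ≤ s ∧ a s < ε / 2 := by rw [hP] at hsspec0; exact hsspec0
    have hsu : s < u := by
      rcases eq_or_lt_of_le hsle with h | h
      · exfalso; have h2 := hsspec.2; rw [h] at h2; linarith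
      · exact h
    have hbig : ∀ t, s < t → t ≤ u → ε / 2 ≤ a t := by
      intro t h1 h2
      by_contra hlt
      push_neg at hlt
      exact hgreat t h1 h2 (by rw [hP]; exact ⟨by omega, hlt⟩)
    have hNs : N ≤ s := le_trans ht0N hst0
    have hTs : T ≤ s := le_trans hN hNs
    have htel : a u - a s = ∑ t ∈ Finset.Ico s u, (a (t + 1) - a t) := by
      rw [Finset.sum_Ico_eq_sub _ hsu.le, Finset.sum_range_sub, Finset.sum_range_sub]
      ring
    have hstep : ε / 2 ≤ ∑ t ∈ Finset.Ico s u, K * (α t + α (t - 1)) := by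
      have h1 : ε / 2 ≤ a u - a s := by
        have h2 := hsspec.2; linarith
      calc ε / 2 ≤ a u - a s := h1
        _ = ∑ t ∈ Finset.Ico s u, (a (t + 1) - a t) := htel
        _ ≤ ∑ t ∈ Finset.Ico s u, |a (t + 1) - a t| :=
            Finset.sum_le_sum fun t _ => le_abs_self _
        _ ≤ ∑ t ∈ Finset.Ico s u, K * (α t + α (t - 1)) := by
            refine Finset.sum_le_sum fun t htm => ?_
            have h3 : s ≤ t := (Finset.mem_Ico.1 htm).1
            exact hinc' t (by omega)
    set S := ∑ t ∈ Finset.Ico (s + 1) u, α t with hS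
    clear_value S
    have hSnn : 0 ≤ S := by
      rw [hS]; exact Finset.sum_nonneg fun t _ => (hαpos t).le
    have hshift : ∑ t ∈ Finset.Ico s u, α (t - 1)
        = ∑ t ∈ Finset.Ico (s - 1) (u - 1), α t := by
      rw [Finset.sum_Ico_eq_sum_range, Finset.sum_Ico_eq_sum_range]
      have h1 : u - 1 - (s - 1) = u - s := by omega
      rw [h1]
      refine Finset.sum_congr rfl fun i _ => ?_
      congr 1
      omega
    have hsub : ∑ t ∈ Finset.Ico (s - 1) (u - 1), α t ≤ α (s - 1) + (α s + S) := by
      have h1 : Finset.Ico (s - 1) (u - 1) ⊆ Finset.Ico (s - 1) u :=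
        Finset.Ico_subset_Ico le_rfl (by omega)
      have h2 : ∑ t ∈ Finset.Ico (s - 1) (u - 1), α t
          ≤ ∑ t ∈ Finset.Ico (s - 1) u, α t :=
        Finset.sum_le_sum_of_subset_of_nonneg h1 fun t _ _ => (hαpos t).le
      have h3 : ∑ t ∈ Finset.Ico (s - 1) u, α t = α (s - 1) + (α s + S) := by
        rw [hS, Finset.sum_eq_sum_Ico_succ_bot (show s - 1 < u by omega),
          show s - 1 + 1 = s by omega,
          Finset.sum_eq_sum_Ico_succ_bot hsu]
      linarith
    have hIcoS : ∑ t ∈ Finset.Ico s u, α t = α s + S := by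
      rw [hS]; exact Finset.sum_eq_sum_Ico_succ_bot hsu _
    have hsum_split : ∑ t ∈ Finset.Ico s u, K * (α t + α (t - 1))
        = K * (∑ t ∈ Finset.Ico s u, α t) + K * (∑ t ∈ Finset.Ico s u, α (t - 1)) := by
      simp only [mul_add, Finset.sum_add_distrib, Finset.mul_sum]
    have hS_lb : ε / (8 * K) ≤ S := by
      have hαs := (hαpos s).le
      have hαs1 := (hαpos (s - 1)).le
      have e1 : K * (∑ t ∈ Finset.Ico s u, α (t - 1)) ≤ K * (α (s - 1) + (α s + S)) := by
        rw [hshift]; exact mul_le_mul_of_nonneg_left hsub hKpos.le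
      have e2 : ε / 2 ≤ K * (α s + S) + K * (α (s - 1) + (α s + S)) := by
        rw [hsum_split, hIcoS] at hstep
        linarith
      have hsmall := hTsmall s hTs
      have e3 : K * α s ≤ ε / 8 := by nlinarith [mul_nonneg hKpos.le hαs1]
      have e4 : ε / 4 ≤ 2 * (K * S) := by nlinarith [e2, hsmall, e3]
      rw [div_le_iff₀ (show (0:ℝ) < 8 * K by linarith)]
      nlinarith [e4]
    have hfin : c ≤ ∑ t ∈ Finset.Ico (s + 1) u, f t := by
      have h1 : ∀ t ∈ Finset.Ico (s + 1) u, (ε / 2) ^ 2 * α t ≤ f t := by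
        intro t htm
        obtain ⟨h1, h2⟩ := Finset.mem_Ico.1 htm
        have h3 := hbig t (by omega) (by omega)
        have h4 : (ε / 2) ^ 2 ≤ a t ^ 2 := by nlinarith
        have h5 := (hαpos t).le
        simp only [hf]
        nlinarith
      calc c = (ε / 2) ^ 2 * (ε / (8 * K)) := hc
        _ ≤ (ε / 2) ^ 2 * S := mul_le_mul_of_nonneg_left hS_lb (sq_nonneg _)
        _ = ∑ t ∈ Finset.Ico (s + 1) u, (ε / 2) ^ 2 * α t := by
            rw [hS, Finset.mul_sum]
        _ ≤ ∑ t ∈ Finset.Ico (s + 1) u, f t := Finset.sum_le_sum h1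
    refine ⟨u, by omega, ?_⟩
    calc c ≤ ∑ t ∈ Finset.Ico (s + 1) u, f t := hfin
      _ ≤ ∑ t ∈ Finset.Ico N u, f t :=
          Finset.sum_le_sum_of_subset_of_nonneg
            (Finset.Ico_subset_Ico (by omega) le_rfl) fun t _ _ => hfnn t
  -- iterate the crossing estimate
  have hiter : ∀ k : ℕ, ∃ N, T ≤ N ∧ (k : ℝ) * c ≤ ∑ t ∈ Finset.Ico T N, f t := by
    intro k
    induction k with
    | zero => exact ⟨T, le_rfl, by simp⟩
    | succ k ih =>
      obtain ⟨N, hN, hle⟩ := ih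
      obtain ⟨N', hN', hle'⟩ := key N hN
      refine ⟨N', by omega, ?_⟩
      have hcons := Finset.sum_Ico_consecutive f hN hN'.le
      have hcast : ((k + 1 : ℕ) : ℝ) * c = (k : ℝ) * c + c := by push_cast; ring
      rw [hcast]
      linarith
  obtain ⟨k, hk⟩ := exists_nat_gt ((∑' t, f t) / c)
  obtain ⟨N, hN, hle⟩ := hiter k
  have h1 : ∑ t ∈ Finset.Ico T N, f t ≤ ∑' t, f t :=
    Summable.sum_le_tsum _ (fun t _ => hfnn t) hsum
  rw [div_lt_iff₀ hcpos] at hk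
  linarith
end

section
/- Let X ⊆ ℝ^n be a convex set, let g(x) = ℓ(Ax) + ⟨b, x⟩ where ℓ is strictly convex and differentiable and A is a matrix, let h be a convex function, and let X* be the (nonempty) set of minimizers of g + h over X. Then Ax* and therefore ∇g(x*) take a common value, say ∇g(x*) = a*, at every point x* ∈ X*; and moreover the quantity h(x*) + ⟨a*, x*⟩ is the same for all x* ∈ X*; that is, for any two optimal solutions x*, x^∞ ∈ X*, one has h(x^∞) + ⟨∇g(x^∞), x^∞⟩ = h(x*) + ⟨∇g(x*), x*⟩. -/
open scoped RealInnerProductSpace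

noncomputable section

/-- Let `X ⊆ ℝ^N` be convex, `g(x) = ℓ(Ax) + ⟨b, x⟩` with `ℓ` strictly
convex and differentiable, `h` convex, and let `X*` be the (nonempty) set of minimizers of
`g + h` over `X`.  Then `Ax*`, and therefore `∇g(x*)`, takes a common value over `X*`, and
the quantity `h(x*) + ⟨∇g(x*), x*⟩` is the same for every `x* ∈ X*`. -/
theorem stmt17 {N s : ℕ} (X : Set (EuclideanSpace ℝ (Fin N))) (hX : Convex ℝ X)
    (A : EuclideanSpace ℝ (Fin N) →L[ℝ] EuclideanSpace ℝ (Fin s))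
    (b : EuclideanSpace ℝ (Fin N))
    (ell : EuclideanSpace ℝ (Fin s) → ℝ)
    (hells : StrictConvexOn ℝ Set.univ ell) (helld : Differentiable ℝ ell)
    (g h : EuclideanSpace ℝ (Fin N) → ℝ)
    (hg : ∀ x, g x = ell (A x) + ⟪b, x⟫)
    (hh : ConvexOn ℝ Set.univ h)
    (Xstar : Set (EuclideanSpace ℝ (Fin N)))
    (hXstar : Xstar = {x | x ∈ X ∧ ∀ z ∈ X, g x + h x ≤ g z + h z})
    (hne : Xstar.Nonempty) :
    ∀ x ∈ Xstar, ∀ x' ∈ Xstar,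
      A x = A x' ∧ gradient g x = gradient g x' ∧
        h x + ⟪gradient g x, x⟫ = h x' + ⟪gradient g x', x'⟫ := by
  subst hXstar
  intro x hx x' hx'
  obtain ⟨hxX, hxopt⟩ := hx
  obtain ⟨hx'X, hx'opt⟩ := hx'
  have heq : g x + h x = g x' + h x' := le_antisymm (hxopt x' hx'X) (hx'opt x hxX)
  -- derivative of g
  have hD : ∀ y : EuclideanSpace ℝ (Fin N),
      HasFDerivAt g (((fderiv ℝ ell (A y)).comp A) + (innerSL ℝ b)) y := by
    intro y
    have h1 : HasFDerivAt (fun z => ell (A z)) ((fderiv ℝ ell (A y)).comp A) y :=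
      ((helld (A y)).hasFDerivAt).comp y (A.hasFDerivAt)
    have h2 : HasFDerivAt (fun z : EuclideanSpace ℝ (Fin N) => ⟪b, z⟫) (innerSL ℝ b) y :=
      (innerSL ℝ b).hasFDerivAt
    have := h1.add h2
    apply this.congr_of_eventuallyEq
    filter_upwards with z
    rw [hg z]; rfl
  -- A x = A x'
  have hAeq : A x = A x' := by
    by_contra hne'
    set m := (1/2 : ℝ) • x + (1/2 : ℝ) • x' with hm
    have hmX : m ∈ X := hX hxX hx'X (by norm_num) (by norm_num) (by norm_num)
    have hopt := hxopt m hmX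
    have hAm : A m = (1/2 : ℝ) • A x + (1/2 : ℝ) • A x' := by
      simp [hm, map_add, map_smul]
    have hl : ell (A m) < (1/2 : ℝ) * ell (A x) + (1/2 : ℝ) * ell (A x') := by
      rw [hAm]
      exact hells.2 (Set.mem_univ _) (Set.mem_univ _) hne' (by norm_num) (by norm_num)
        (by norm_num)
    have hhm : h m ≤ (1/2 : ℝ) * h x + (1/2 : ℝ) * h x' :=
      hh.2 (Set.mem_univ x) (Set.mem_univ x') (by norm_num) (by norm_num) (by norm_num)
    have hbm : ⟪b, m⟫ = (1/2 : ℝ) * ⟪b, x⟫ + (1/2 : ℝ) * ⟪b, x'⟫ := by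
      rw [hm, inner_add_right, real_inner_smul_right, real_inner_smul_right]
    rw [hg m, hg x] at hopt
    rw [hg x, hg x'] at heq
    rw [hbm] at hopt
    linarith
  -- fderiv equality
  have hfd : fderiv ℝ g x = fderiv ℝ g x' := by
    rw [(hD x).fderiv, (hD x').fderiv, hAeq]
  have hgrad : gradient g x = gradient g x' := by
    simp only [gradient, hfd]
  refine ⟨hAeq, hgrad, ?_⟩
  -- inner evaluation
  have hinner : ∀ v, ⟪gradient g x, v⟫ = fderiv ℝ g x v := by
    intro v
    simp [gradient, InnerProductSpace.toDual_symm_apply]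
  have hfval : ∀ v, fderiv ℝ g x v = fderiv ℝ ell (A x) (A v) + ⟪b, v⟫ := by
    intro v
    rw [(hD x).fderiv]
    simp
  have key : ⟪gradient g x, x⟫ - ⟪gradient g x', x'⟫ = ⟪b, x⟫ - ⟪b, x'⟫ := by
    rw [← hgrad, ← inner_sub_right, hinner, hfval]
    have : A (x - x') = 0 := by rw [map_sub, hAeq, sub_self]
    rw [this]
    simp [inner_sub_right]
  have hgx : g x - g x' = ⟪b, x⟫ - ⟪b, x'⟫ := by
    rw [hg x, hg x', hAeq]; ring
  linarith
end
end
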